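/- Let S₀, S₁ ⊆ ℝⁿ be compact sets of positive Lebesgue measure, let q : S₀ × S₁ → ℝ be continuous and strictly positive, and let ρ₀, ρ₁ be probability densities on S₀, S₁ respectively. Given g ∈ L∞₊(S₁), define φ₁ = ρ₁/g on S₁, φ₀(x₀) = ∫_{S₁} q(x₀,x₁) φ₁(x₁) dx₁ on S₀, φ̂₀ = ρ₀/φ₀ on S₀, and φ̂₁(x₁) = ∫_{S₀} q(x₀,x₁) φ̂₀(x₀) dx₀ on S₁. If there exists λ > 0 with φ̂₁ = λ·g almost everywhere on S₁, then λ = 1. -/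

import Mathlib

open MeasureTheory

noncomputable section

/-- `L∞₊(S)`: measurable real functions bounded below and above by positive
constants a.e. on `S` (w.r.t. Lebesgue measure restricted to `S`). -/
def MemLinfPos {α : Type*} [MeasurableSpace α] (μ : Measure α) (f : α → ℝ) : Prop :=
  Measurable f ∧ ∃ c K : ℝ, 0 < c ∧ c ≤ K ∧ ∀ᵐ x ∂μ, c ≤ f x ∧ f x ≤ K

/-- `M(f,g) = essSup (f/g)`. -/
def Mratio {α : Type*} [MeasurableSpace α] (μ : Measure α) (f g : α → ℝ) : ℝ :=
  essSup (fun x => f x / g x) μ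

/-- `m(f,g) = essInf (f/g)`. -/
def mratio {α : Type*} [MeasurableSpace α] (μ : Measure α) (f g : α → ℝ) : ℝ :=
  essInf (fun x => f x / g x) μ

/-- Hilbert projective metric `d_H(f,g) = log (M(f,g)/m(f,g))`. -/
def hilbertDist {α : Type*} [MeasurableSpace α] (μ : Measure α) (f g : α → ℝ) : ℝ :=
  Real.log (Mratio μ f g / mratio μ f g)

/-!
Pair `ψ₁` with `φ₁` over `S₁`. On the one hand `ψ₁ φ₁ = λ g · ρ₁ / g = λ ρ₁`, so the pairing is
`λ`. On the other hand, by Fubini the kernel `q` can be moved across the pairing, which turns it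
into `∫ ψ₀ φ₀ = ∫ ρ₀ = 1` over `S₀`. Fubini applies because `q ≥ ε > 0` bounds `φ₀` below by
`ε ∫ φ₁ > 0`, which makes `ψ₀ = ρ₀ / φ₀` integrable.
-/

open Function

section KernelPairing

variable {α β : Type*} [MeasurableSpace α] [MeasurableSpace β] {μ : Measure α} {ν : Measure β}
  {q : α → β → ℝ}

theorem integral_integral_kernel_mul_comm [SFinite μ] [SFinite ν] {h : α → ℝ} {f : β → ℝ}
    (hint : Integrable (fun p : α × β => q p.1 p.2 * h p.1 * f p.2) (μ.prod ν)) :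
    ∫ y, (∫ x, q x y * h x ∂μ) * f y ∂ν = ∫ x, h x * ∫ y, q x y * f y ∂ν ∂μ := by
  simp_rw [← integral_mul_const, ← integral_const_mul]
  rw [← integral_integral_swap hint]
  refine integral_congr_ae (.of_forall fun x => integral_congr_ae (.of_forall fun y => ?_))
  ring

theorem integrable_kernel_mul_prod [SFinite ν] {M : ℝ} {h : α → ℝ} {f : β → ℝ}
    (hq : AEStronglyMeasurable (uncurry q) (μ.prod ν)) (hqM : ∀ᵐ p ∂μ.prod ν, ‖q p.1 p.2‖ ≤ M)
    (hh : Integrable h μ) (hf : Integrable f ν) :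
    Integrable (fun p : α × β => q p.1 p.2 * h p.1 * f p.2) (μ.prod ν) := by
  simpa only [mul_assoc, uncurry_def] using (hh.mul_prod hf).bdd_mul hq hqM

theorem ae_mul_integral_le_integral_kernel_mul [SFinite ν] {ε M : ℝ} {f : β → ℝ}
    (hq : AEStronglyMeasurable (uncurry q) (μ.prod ν))
    (hqb : ∀ᵐ p ∂μ.prod ν, ε ≤ q p.1 p.2 ∧ ‖q p.1 p.2‖ ≤ M)
    (hf : Integrable f ν) (hf0 : 0 ≤ᵐ[ν] f) :
    ∀ᵐ x ∂μ, ε * ∫ y, f y ∂ν ≤ ∫ y, q x y * f y ∂ν := by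
  filter_upwards [hq.prodMk_left, Measure.ae_ae_of_ae_prod hqb] with x hqx hbx
  rw [← integral_const_mul]
  refine integral_mono_ae (hf.const_mul ε) (hf.bdd_mul hqx (hbx.mono fun _ h => h.2)) ?_
  filter_upwards [hbx, hf0] with y hy hfy
  exact mul_le_mul_of_nonneg_right hy.1 hfy

theorem integral_kernel_adjoint_mul_eq [SFinite μ] [SFinite ν] {ε M : ℝ} {ρ φ ψ : α → ℝ}
    {f : β → ℝ} (hq : AEStronglyMeasurable (uncurry q) (μ.prod ν))
    (hqb : ∀ᵐ p ∂μ.prod ν, ε ≤ q p.1 p.2 ∧ ‖q p.1 p.2‖ ≤ M) (hε : 0 < ε)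
    (hf : Integrable f ν) (hf0 : 0 ≤ᵐ[ν] f) (hfpos : 0 < ∫ y, f y ∂ν) (hρ : Integrable ρ μ)
    (hφ : ∀ᵐ x ∂μ, φ x = ∫ y, q x y * f y ∂ν) (hψ : ∀ᵐ x ∂μ, ψ x = ρ x / φ x) :
    ∫ y, (∫ x, q x y * ψ x ∂μ) * f y ∂ν = ∫ x, ρ x ∂μ := by
  set a := ε * ∫ y, f y ∂ν
  have ha : 0 < a := mul_pos hε hfpos
  have hφa : ∀ᵐ x ∂μ, a ≤ φ x := by
    filter_upwards [hφ, ae_mul_integral_le_integral_kernel_mul hq hqb hf hf0] with x hx h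
    rwa [hx]
  have hφm : AEStronglyMeasurable φ μ :=
    (hq.mul hf.1.comp_snd).integral_prod_right'.congr (hφ.mono fun _ h => h.symm)
  have hψi : Integrable ψ μ := by
    refine (hρ.norm.div_const a).mono' ((hρ.1.div₀ hφm).congr (hψ.mono fun _ h => h.symm)) ?_
    filter_upwards [hψ, hφa] with x hx hxa
    rw [hx, norm_div, Real.norm_of_nonneg (ha.le.trans hxa)]
    exact div_le_div_of_nonneg_left (norm_nonneg _) ha hxa
  rw [integral_integral_kernel_mul_comm
    (integrable_kernel_mul_prod hq (hqb.mono fun _ h => h.2) hψi hf)]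
  refine integral_congr_ae ?_
  filter_upwards [hφ, hψ, hφa] with x hφx hψx hxa
  rw [hψx, ← hφx, div_mul_cancel₀ _ (ha.trans_le hxa).ne']

end KernelPairing

namespace MemLinfPos

variable {α : Type*} [MeasurableSpace α] {μ : Measure α} {g ρ : α → ℝ}

theorem ae_pos (hg : MemLinfPos μ g) : ∀ᵐ x ∂μ, 0 < g x := by
  obtain ⟨-, c, _, hc, -, hgb⟩ := hg
  exact hgb.mono fun x hx => hc.trans_le hx.1

theorem integrable_div (hg : MemLinfPos μ g) (hρ : Integrable ρ μ) :
    Integrable (fun x => ρ x / g x) μ := by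
  obtain ⟨hgm, c, _, hc, -, hgb⟩ := hg
  refine (hρ.norm.div_const c).mono' (hρ.1.div₀ hgm.aestronglyMeasurable) ?_
  filter_upwards [hgb] with x hx
  rw [norm_div, Real.norm_of_nonneg (hc.le.trans hx.1)]
  exact div_le_div_of_nonneg_left (norm_nonneg _) hc hx.1

theorem integral_div_pos (hg : MemLinfPos μ g) (hρ0 : 0 ≤ᵐ[μ] ρ) (hρ : 0 < ∫ x, ρ x ∂μ) :
    0 < ∫ x, ρ x / g x ∂μ := by
  have hρi : Integrable ρ μ := .of_integral_ne_zero hρ.ne'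
  have hρgi := hg.integrable_div hρi
  obtain ⟨-, c, K, hc, hcK, hgb⟩ := hg
  calc 0 < (∫ x, ρ x ∂μ) / K := div_pos hρ (hc.trans_le hcK)
    _ = ∫ x, ρ x / K ∂μ := (integral_div _ _).symm
    _ ≤ ∫ x, ρ x / g x ∂μ := by
      refine integral_mono_ae (hρi.div_const K) hρgi ?_
      filter_upwards [hgb, hρ0] with x hx hρx
      exact div_le_div_of_nonneg_left hρx (hc.trans_le hx.1) hx.2

end MemLinfPos

section ContinuousKernel

variable {X Y : Type*} [TopologicalSpace X] [MeasurableSpace X] [TopologicalSpace Y]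
  [MeasurableSpace Y] {μ : Measure X} {ν : Measure Y} [SFinite μ] [SFinite ν]
  {q : X → Y → ℝ} {s : Set X} {t : Set Y}

theorem ContinuousOn.aestronglyMeasurable_restrict_prod [OpensMeasurableSpace (X × Y)]
    (hq : ContinuousOn (uncurry q) (s ×ˢ t)) (hs : MeasurableSet s) (ht : MeasurableSet t) :
    AEStronglyMeasurable (uncurry q) ((μ.restrict s).prod (ν.restrict t)) := by
  rw [Measure.prod_restrict]
  exact hq.aestronglyMeasurable (hs.prod ht)

theorem ContinuousOn.exists_ae_restrict_prod_bounds (hq : ContinuousOn (uncurry q) (s ×ˢ t))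
    (hst : IsCompact (s ×ˢ t)) (hs : MeasurableSet s) (ht : MeasurableSet t)
    (hpos : ∀ x ∈ s, ∀ y ∈ t, 0 < q x y) :
    ∃ ε M, 0 < ε ∧ ∀ᵐ p ∂(μ.restrict s).prod (ν.restrict t), ε ≤ q p.1 p.2 ∧ ‖q p.1 p.2‖ ≤ M := by
  obtain ⟨ε, hε, hεq⟩ := hst.exists_forall_le' hq fun p hp => hpos _ hp.1 _ hp.2
  obtain ⟨M, hM⟩ := hst.exists_bound_of_continuousOn hq
  refine ⟨ε, M, hε, ?_⟩
  rw [Measure.prod_restrict]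
  exact (ae_restrict_mem (hs.prod ht)).mono fun p hp => ⟨hεq p hp, hM p hp⟩

end ContinuousKernel

theorem fixed_point_eigenvalue_one_general (n : ℕ)
    (S₀ S₁ : Set (EuclideanSpace ℝ (Fin n)))
    (hS₀ : IsCompact S₀) (hS₁ : IsCompact S₁)
    (q : EuclideanSpace ℝ (Fin n) → EuclideanSpace ℝ (Fin n) → ℝ)
    (hqc : ContinuousOn (fun p : EuclideanSpace ℝ (Fin n) × EuclideanSpace ℝ (Fin n) =>
      q p.1 p.2) (S₀ ×ˢ S₁))
    (hqpos : ∀ x ∈ S₀, ∀ y ∈ S₁, 0 < q x y)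
    (ρ₀ ρ₁ : EuclideanSpace ℝ (Fin n) → ℝ)
    (hρ₁nn : ∀ x ∈ S₁, 0 ≤ ρ₁ x)
    (hρ₀int : ∫ x in S₀, ρ₀ x = 1) (hρ₁int : ∫ x in S₁, ρ₁ x = 1)
    (g : EuclideanSpace ℝ (Fin n) → ℝ) (hg : MemLinfPos (volume.restrict S₁) g)
    -- the chain φ₁ = ρ₁/g, φ₀ = E(φ₁), ψ₀ = ρ₀/φ₀, ψ₁ = E†(ψ₀)
    (φ₁ φ₀ ψ₀ ψ₁ : EuclideanSpace ℝ (Fin n) → ℝ)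
    (hφ₁ : ∀ x₁ ∈ S₁, φ₁ x₁ = ρ₁ x₁ / g x₁)
    (hφ₀ : ∀ x₀ ∈ S₀, φ₀ x₀ = ∫ x₁ in S₁, q x₀ x₁ * φ₁ x₁)
    (hψ₀ : ∀ x₀ ∈ S₀, ψ₀ x₀ = ρ₀ x₀ / φ₀ x₀)
    (hψ₁ : ∀ x₁ ∈ S₁, ψ₁ x₁ = ∫ x₀ in S₀, q x₀ x₁ * ψ₀ x₀)
    (l : ℝ)
    (hfix : ∀ᵐ x₁ ∂(volume.restrict S₁), ψ₁ x₁ = l * g x₁) :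
    l = 1 := by
  have hS₀m := hS₀.isClosed.measurableSet
  have hS₁m := hS₁.isClosed.measurableSet
  obtain ⟨ε, M, hε, hqb⟩ := hqc.exists_ae_restrict_prod_bounds (μ := volume) (ν := volume)
    (hS₀.prod hS₁) hS₀m hS₁m hqpos
  have hφ₁ae : φ₁ =ᵐ[volume.restrict S₁] fun x => ρ₁ x / g x := (ae_restrict_mem hS₁m).mono hφ₁
  have hρ₁0 : 0 ≤ᵐ[volume.restrict S₁] ρ₁ := (ae_restrict_mem hS₁m).mono hρ₁nn
  have hpair : ∫ x₁ in S₁, ψ₁ x₁ * φ₁ x₁ = ∫ x₀ in S₀, ρ₀ x₀ := by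
    rw [setIntegral_congr_fun hS₁m fun x hx => by rw [hψ₁ x hx]]
    refine integral_kernel_adjoint_mul_eq (hqc.aestronglyMeasurable_restrict_prod hS₀m hS₁m) hqb
      hε ((hg.integrable_div (.of_integral_ne_zero (by simp [hρ₁int]))).congr hφ₁ae.symm)
      ?_ ?_ (.of_integral_ne_zero (by simp [hρ₀int]))
      ((ae_restrict_mem hS₀m).mono hφ₀) ((ae_restrict_mem hS₀m).mono hψ₀)
    · filter_upwards [hφ₁ae, hρ₁0, hg.ae_pos] with x hx hρx hgx
      exact hx ▸ div_nonneg hρx hgx.le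
    · rw [integral_congr_ae hφ₁ae]
      exact hg.integral_div_pos hρ₁0 (by simp [hρ₁int])
  have heig : ∫ x₁ in S₁, ψ₁ x₁ * φ₁ x₁ = l * ∫ x₁ in S₁, ρ₁ x₁ := by
    rw [← integral_const_mul]
    refine integral_congr_ae ?_
    filter_upwards [hfix, hφ₁ae, hg.ae_pos] with x hψx hφx hgx
    rw [hψx, hφx, mul_assoc, mul_div_cancel₀ _ hgx.ne']
  rwa [heig, hρ₀int, hρ₁int, mul_one] at hpair

/-- if the fixed-point equation `φ̂₁ = λ g` holds for the composed
Schrödinger iteration started at `g`, then necessarily `λ = 1`. -/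
theorem fixed_point_eigenvalue_one (n : ℕ)
    (S₀ S₁ : Set (EuclideanSpace ℝ (Fin n)))
    (hS₀ : IsCompact S₀) (hS₁ : IsCompact S₁)
    (hS₀pos : 0 < volume S₀) (hS₁pos : 0 < volume S₁)
    (q : EuclideanSpace ℝ (Fin n) → EuclideanSpace ℝ (Fin n) → ℝ)
    (hqc : ContinuousOn (fun p : EuclideanSpace ℝ (Fin n) × EuclideanSpace ℝ (Fin n) =>
      q p.1 p.2) (S₀ ×ˢ S₁))
    (hqpos : ∀ x ∈ S₀, ∀ y ∈ S₁, 0 < q x y)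
    (ρ₀ ρ₁ : EuclideanSpace ℝ (Fin n) → ℝ)
    (hρ₀m : Measurable ρ₀) (hρ₁m : Measurable ρ₁)
    (hρ₀nn : ∀ x ∈ S₀, 0 ≤ ρ₀ x) (hρ₁nn : ∀ x ∈ S₁, 0 ≤ ρ₁ x)
    (hρ₀int : ∫ x in S₀, ρ₀ x = 1) (hρ₁int : ∫ x in S₁, ρ₁ x = 1)
    (g : EuclideanSpace ℝ (Fin n) → ℝ) (hg : MemLinfPos (volume.restrict S₁) g)
    -- the chain φ₁ = ρ₁/g, φ₀ = E(φ₁), ψ₀ = ρ₀/φ₀, ψ₁ = E†(ψ₀)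
    (φ₁ φ₀ ψ₀ ψ₁ : EuclideanSpace ℝ (Fin n) → ℝ)
    (hφ₁ : ∀ x₁ ∈ S₁, φ₁ x₁ = ρ₁ x₁ / g x₁)
    (hφ₀ : ∀ x₀ ∈ S₀, φ₀ x₀ = ∫ x₁ in S₁, q x₀ x₁ * φ₁ x₁)
    (hψ₀ : ∀ x₀ ∈ S₀, ψ₀ x₀ = ρ₀ x₀ / φ₀ x₀)
    (hψ₁ : ∀ x₁ ∈ S₁, ψ₁ x₁ = ∫ x₀ in S₀, q x₀ x₁ * ψ₀ x₀)
    (l : ℝ) (hl : 0 < l)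
    (hfix : ∀ᵐ x₁ ∂(volume.restrict S₁), ψ₁ x₁ = l * g x₁) :
    l = 1 :=
  fixed_point_eigenvalue_one_general n S₀ S₁ hS₀ hS₁ q hqc hqpos ρ₀ ρ₁ hρ₁nn hρ₀int hρ₁int g hg φ₁
    φ₀ ψ₀ ψ₁ hφ₁ hφ₀ hψ₀ hψ₁ l hfix
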